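/- arXiv:1203.0679 — 4 statements merged into one kernel-verified Lean document; each statement's English description precedes it below -/
import Mathlib

section
/- There exists a unique Borel probability measure μ on ℝ with the following property: if Y is a random variable with law μ and U is uniformly distributed on [0,1] and independent of Y, then the random variable U·Y + U·(1−U) also has law μ. -/
/-!
Write `φ_μ` for the characteristic function of `μ`. If `Y` has law `μ`, then `U·Y + U·(1−U)` has
characteristic function `s ↦ ∫₀¹ e^{isu(1−u)} φ_μ(su) du`.

For two solutions `μ, ν`, the function `g = |φ_μ − φ_ν|` is continuous, vanishes at `0` and
satisfies `g(s) ≤ ∫₀¹ g(su) du`; at a point where `g` attains its maximum over `[−|s|, |s|]` this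
inequality would be strict if that maximum were positive, so `g = 0`.

For existence, the map halves the constant `C` of a bound `|φ_μ(t) − φ_ν(t)| ≤ C|t|`, so the
characteristic functions of the iterates of the map starting at `δ₀` converge geometrically fast
to a function `f` with `|f(t) − 1| ≤ 2|t|`. By Lévy's continuity theorem (tightness and Prokhorov)
`f` is the characteristic function of a probability measure, and that measure is a fixed point.
-/

open MeasureTheory Filter Topology Set Complex

noncomputable section

theorem charFun_map_prod_mul_add {μ ν : Measure ℝ} [IsFiniteMeasure μ] [IsFiniteMeasure ν]
    {b : ℝ → ℝ} (hb : Measurable b) (s : ℝ) :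
    charFun ((μ.prod ν).map fun p => p.2 * p.1 + b p.2) s =
      ∫ u, cexp (↑(s * b u) * I) * charFun μ (s * u) ∂ν := by
  have hmeas : Measurable fun p : ℝ × ℝ => p.2 * p.1 + b p.2 := by fun_prop
  rw [charFun_apply_real, integral_map hmeas.aemeasurable (by fun_prop), integral_prod_symm]
  · refine integral_congr_ae (ae_of_all _ fun u => ?_)
    simp only [charFun_apply_real, ← integral_const_mul, ← Complex.exp_add]
    congr with y
    push_cast
    ring_nf
  · refine Integrable.of_bound (by fun_prop) 1 (ae_of_all _ fun p => ?_)
    rw [← ofReal_mul, Complex.norm_exp_ofReal_mul_I]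

theorem nonpos_of_le_integral_comp_mul {g : ℝ → ℝ} (hg : Continuous g) (hg0 : g 0 = 0)
    (hle : ∀ s, g s ≤ ∫ u in 0..1, g (s * u)) (s : ℝ) : g s ≤ 0 := by
  by_contra! hs
  obtain ⟨s₀, hs₀, hmax⟩ := (isCompact_Icc (a := -|s|) (b := |s|)).exists_isMaxOn
    ⟨s, neg_abs_le s, le_abs_self s⟩ hg.continuousOn
  have hscaled (u : ℝ) (hu : u ∈ Icc (0:ℝ) 1) : g (s₀ * u) ≤ g s₀ := hmax <| abs_le.1 <| by
    rw [abs_mul, abs_of_nonneg hu.1]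
    nlinarith [abs_le.2 hs₀, abs_nonneg s₀, hu.2]
  have hlt : ∫ u in 0..1, g (s₀ * u) < ∫ u in (0:ℝ)..1, g s₀ :=
    intervalIntegral.integral_lt_integral_of_continuousOn_of_le_of_exists_lt zero_lt_one
      (by fun_prop) continuousOn_const (fun u hu => hscaled u (Ioc_subset_Icc_self hu))
      ⟨0, left_mem_Icc.2 zero_le_one, by
        simpa [hg0] using hs.trans_le (hmax ⟨neg_abs_le s, le_abs_self s⟩)⟩
  rw [intervalIntegral.integral_const, sub_zero, one_smul] at hlt
  exact (hle s₀).not_gt hlt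

theorem exists_charFun_eq_of_tendsto_charFun {E : Type*} [NormedAddCommGroup E]
    [InnerProductSpace ℝ E] [FiniteDimensional ℝ E] [MeasurableSpace E] [BorelSpace E]
    {μ : ℕ → Measure E} [∀ n, IsProbabilityMeasure (μ n)] {f : E → ℂ} (hf : ContinuousAt f 0)
    (h : ∀ t, Tendsto (fun n => charFun (μ n) t) atTop (𝓝 (f t))) :
    ∃ ν : Measure E, IsProbabilityMeasure ν ∧ charFun ν = f := by
  let μP (n : ℕ) : ProbabilityMeasure E := ⟨μ n, inferInstance⟩
  have htight : IsTightMeasureSet {(ν : Measure E) | ν ∈ range μP} := by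
    convert isTightMeasureSet_of_tendsto_charFun hf h
    ext; simp only [mem_range, exists_exists_eq_and]; rfl
  obtain ⟨ν, -, φ, hφ, hlim⟩ := (isCompact_closure_of_isTightMeasureSet htight).tendsto_subseq
    fun n => subset_closure (mem_range_self n)
  refine ⟨ν, inferInstance, funext fun t => tendsto_nhds_unique ?_ ((h t).comp hφ.tendsto_atTop)⟩
  exact ProbabilityMeasure.tendsto_iff_tendsto_charFun.1 hlim t

def perpetuityMap (μ : Measure ℝ) : Measure ℝ :=
  (μ.prod (volume.restrict (Icc (0:ℝ) 1))).map fun p => p.2 * p.1 + p.2 * (1 - p.2)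

instance : IsProbabilityMeasure (volume.restrict (Icc (0:ℝ) 1)) := ⟨by simp⟩

instance (μ : Measure ℝ) [IsProbabilityMeasure μ] : IsProbabilityMeasure (perpetuityMap μ) :=
  Measure.isProbabilityMeasure_map (by fun_prop)

theorem charFun_perpetuityMap (μ : Measure ℝ) [IsFiniteMeasure μ] (s : ℝ) :
    charFun (perpetuityMap μ) s =
      ∫ u in 0..1, cexp (↑(s * (u * (1 - u))) * I) * charFun μ (s * u) := by
  rw [perpetuityMap, charFun_map_prod_mul_add (b := fun u => u * (1 - u)) (by fun_prop),
    intervalIntegral.integral_of_le zero_le_one, integral_Icc_eq_integral_Ioc]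

theorem norm_charFun_perpetuityMap_sub_le (μ ν : Measure ℝ) [IsFiniteMeasure μ]
    [IsFiniteMeasure ν] (s : ℝ) :
    ‖charFun (perpetuityMap μ) s - charFun (perpetuityMap ν) s‖ ≤
      ∫ u in 0..1, ‖charFun μ (s * u) - charFun ν (s * u)‖ := by
  rw [charFun_perpetuityMap, charFun_perpetuityMap, ← intervalIntegral.integral_sub
    ((by fun_prop : Continuous _).intervalIntegrable _ _)
    ((by fun_prop : Continuous _).intervalIntegrable _ _)]
  refine (intervalIntegral.norm_integral_le_integral_norm zero_le_one).trans_eq ?_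
  congr with u
  rw [← mul_sub, norm_mul, Complex.norm_exp_ofReal_mul_I, one_mul]

theorem norm_charFun_perpetuityMap_sub_le_mul_abs {μ ν : Measure ℝ} [IsFiniteMeasure μ]
    [IsFiniteMeasure ν] {C : ℝ} (h : ∀ t, ‖charFun μ t - charFun ν t‖ ≤ C * |t|) (s : ℝ) :
    ‖charFun (perpetuityMap μ) s - charFun (perpetuityMap ν) s‖ ≤ C / 2 * |s| := by
  calc _ ≤ ∫ u in 0..1, ‖charFun μ (s * u) - charFun ν (s * u)‖ :=
        norm_charFun_perpetuityMap_sub_le μ ν s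
    _ ≤ ∫ u in 0..1, C * |s| * u :=
        intervalIntegral.integral_mono_on zero_le_one
          ((by fun_prop : Continuous _).intervalIntegrable _ _)
          ((by fun_prop : Continuous _).intervalIntegrable _ _) fun u hu => by
            simpa [abs_mul, abs_of_nonneg hu.1, mul_assoc] using h (s * u)
    _ = C / 2 * |s| := by
        rw [intervalIntegral.integral_const_mul, integral_id]
        ring

theorem eq_of_perpetuityMap_eq_self {μ ν : Measure ℝ} [IsProbabilityMeasure μ]
    [IsProbabilityMeasure ν] (hμ : perpetuityMap μ = μ) (hν : perpetuityMap ν = ν) : μ = ν := by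
  have hdist := nonpos_of_le_integral_comp_mul (g := fun s => ‖charFun μ s - charFun ν s‖)
    (by fun_prop) (by simp) fun s => by
      simpa only [hμ, hν] using norm_charFun_perpetuityMap_sub_le μ ν s
  exact Measure.ext_of_charFun (funext fun s => sub_eq_zero.1 (norm_le_zero_iff.1 (hdist s)))

theorem norm_charFun_perpetuityMap_dirac_sub_le (s : ℝ) :
    ‖charFun (perpetuityMap (Measure.dirac 0)) s - charFun (Measure.dirac 0) s‖ ≤ |s| := by
  have hone : charFun (Measure.dirac (0:ℝ)) = 1 := by ext; simp
  rw [charFun_perpetuityMap, hone]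
  calc _ = ‖∫ u in (0:ℝ)..1, (cexp (↑(s * (u * (1 - u))) * I) - 1)‖ := by
        rw [intervalIntegral.integral_sub ((by fun_prop : Continuous _).intervalIntegrable _ _)
          intervalIntegrable_const]
        simp
    _ ≤ |s| * |1 - 0| := intervalIntegral.norm_integral_le_of_norm_le_const fun u hu => by
        rw [uIoc_of_le zero_le_one] at hu
        have hu' : 0 ≤ u * (1 - u) := by nlinarith [hu.1, hu.2]
        rw [mul_comm]
        refine Real.norm_exp_I_mul_ofReal_sub_one_le.trans ?_
        rw [Real.norm_eq_abs, abs_mul, abs_of_nonneg hu']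
        exact mul_le_of_le_one_right (abs_nonneg s) (by nlinarith [hu.1, hu.2])
    _ = |s| := by simp

instance (n : ℕ) : IsProbabilityMeasure (perpetuityMap^[n] (Measure.dirac 0)) := by
  induction n with
  | zero => rw [Function.iterate_zero_apply]; infer_instance
  | succ n ih => rw [Function.iterate_succ_apply']; infer_instance

theorem norm_charFun_perpetuityMap_iterate_succ_sub_le (n : ℕ) (t : ℝ) :
    ‖charFun (perpetuityMap^[n + 1] (Measure.dirac 0)) t -
      charFun (perpetuityMap^[n] (Measure.dirac 0)) t‖ ≤ (2 ^ n)⁻¹ * |t| := by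
  induction n generalizing t with
  | zero => simpa using norm_charFun_perpetuityMap_dirac_sub_le t
  | succ n ih =>
    simp only [Function.iterate_succ_apply'] at ih ⊢
    exact (norm_charFun_perpetuityMap_sub_le_mul_abs ih t).trans_eq (by ring)

theorem exists_tendsto_charFun_perpetuityMap_iterate : ∃ f : ℝ → ℂ,
    (∀ t, Tendsto (fun n => charFun (perpetuityMap^[n] (Measure.dirac 0)) t) atTop (𝓝 (f t))) ∧
    ∀ t n, ‖charFun (perpetuityMap^[n] (Measure.dirac 0)) t - f t‖ ≤ 2 * (2 ^ n)⁻¹ * |t| := by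
  have hstep (t : ℝ) (n : ℕ) : dist (charFun (perpetuityMap^[n] (Measure.dirac 0)) t)
      (charFun (perpetuityMap^[n + 1] (Measure.dirac 0)) t) ≤ 2 * |t| / 2 / 2 ^ n := by
    rw [dist_comm, dist_eq_norm]
    exact (norm_charFun_perpetuityMap_iterate_succ_sub_le n t).trans_eq (by ring)
  choose f hf using fun t =>
    cauchySeq_tendsto_of_complete (cauchySeq_of_le_geometric_two (hstep t))
  refine ⟨f, hf, fun t n => ?_⟩
  rw [← dist_eq_norm]
  exact (dist_le_of_le_geometric_two_of_tendsto (hstep t) (hf t) n).trans_eq (by ring)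

theorem exists_perpetuityMap_eq_self :
    ∃ μ : Measure ℝ, IsProbabilityMeasure μ ∧ perpetuityMap μ = μ := by
  obtain ⟨f, hf, hrate⟩ := exists_tendsto_charFun_perpetuityMap_iterate
  have hf_one (t : ℝ) : dist (f t) 1 ≤ 2 * |t| := by
    simpa [dist_eq_norm, norm_sub_rev] using hrate t 0
  have hf_cont : ContinuousAt f 0 := by
    have hf0 : f 0 = 1 := dist_le_zero.1 (by simpa using hf_one 0)
    refine continuousAt_of_locally_lipschitz zero_lt_one 2 fun t _ => ?_
    simpa [hf0] using hf_one t
  obtain ⟨μ, hμ, hμf⟩ := exists_charFun_eq_of_tendsto_charFun hf_cont hf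
  refine ⟨μ, hμ, Measure.ext_of_charFun (funext fun t => ?_)⟩
  have hlim : Tendsto (fun n => charFun (perpetuityMap^[n + 1] (Measure.dirac 0)) t) atTop
      (𝓝 (charFun (perpetuityMap μ) t)) := by
    refine tendsto_iff_norm_sub_tendsto_zero.2 (squeeze_zero (fun _ => norm_nonneg _) (fun n => ?_)
      (?_ : Tendsto (fun n : ℕ => ((2:ℝ) ^ n)⁻¹ * |t|) atTop (𝓝 0)))
    · rw [Function.iterate_succ_apply']
      exact (norm_charFun_perpetuityMap_sub_le_mul_abs (fun s => hμf ▸ hrate s n) t).trans_eq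
        (by ring)
    · simpa using (tendsto_inv_atTop_zero.comp
        (tendsto_pow_atTop_atTop_of_one_lt one_lt_two)).mul_const |t|
  rw [hμf]
  exact tendsto_nhds_unique hlim ((hf t).comp (tendsto_add_atTop_nat 1))

end

/-- There exists a unique Borel probability measure `μ` on `ℝ` such that if `Y` has law `μ`
and `U` is uniform on `[0,1]` independent of `Y`, then `U·Y + U·(1−U)` has law `μ`. -/
theorem exists_unique_fixed_point :
    ∃! μ : Measure ℝ, IsProbabilityMeasure μ ∧
      Measure.map (fun p : ℝ × ℝ => p.2 * p.1 + p.2 * (1 - p.2))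
        (μ.prod (volume.restrict (Set.Icc (0:ℝ) 1))) = μ := by
  obtain ⟨μ, hμ, hfix⟩ := exists_perpetuityMap_eq_self
  exact ⟨μ, ⟨hμ, hfix⟩, fun ν ⟨_, hνfix⟩ => eq_of_perpetuityMap_eq_self hνfix hfix⟩
end

section
/- Let μ be the unique Borel probability measure on ℝ such that if Y has law μ and U is uniform on [0,1] independent of Y, then U·Y + U·(1−U) has law μ. Then μ is supported by the unit interval, i.e., μ([0,1]) = 1. -/
open MeasureTheory Filter Set Topology
open scoped ENNReal

/-!
Read the fixed-point equation as stationarity of `μ` for the Markov chain `y ↦ U·y + U·(1−U)`.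
If a set `S` is absorbing for this chain and almost every starting point outside `S` enters `S`
with positive probability, stationarity forces `μ Sᶜ = 0`: the mass flowing into `S` in one step
would otherwise exceed `μ S`. Since `U·y + U·(1−U) = U·(y + 1 − U)` is close to `0` for small `U`,
the chain enters `(−1, ∞)` from every point with positive probability, and then enters `[0, 1]`
from every point of `(−1, ∞)`; both sets are absorbing.
-/

section Stationary

variable {α β : Type*} [MeasurableSpace α] [MeasurableSpace β]
  {μ : Measure α} {ν : Measure β} {T : α × β → α}

theorem measure_eq_lintegral_of_map_prod_eq [SFinite μ] [SFinite ν] (hT : Measurable T)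
    (hfix : (μ.prod ν).map T = μ) {S : Set α} (hS : MeasurableSet S) :
    μ S = ∫⁻ x, ν {u | T (x, u) ∈ S} ∂μ := by
  conv_lhs => rw [← hfix]
  rw [Measure.map_apply hT hS, Measure.prod_apply (hT hS)]
  rfl

theorem measure_compl_eq_zero_of_map_prod_eq [IsFiniteMeasure μ] [IsProbabilityMeasure ν]
    (hT : Measurable T) (hfix : (μ.prod ν).map T = μ) {S : Set α} (hS : MeasurableSet S)
    (habsorb : ∀ x ∈ S, ∀ᵐ u ∂ν, T (x, u) ∈ S)
    (henter : ∀ᵐ x ∂μ, x ∉ S → 0 < ν {u | T (x, u) ∈ S}) :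
    μ Sᶜ = 0 := by
  set g : α → ℝ≥0∞ := fun x => ν {u | T (x, u) ∈ S}
  have hg : Measurable g := measurable_measure_prodMk_left (hT hS)
  have hg_one : ∀ x ∈ S, g x = 1 := fun x hx => by
    rw [← measure_univ (μ := ν)]
    exact (ae_mem_iff_measure_eq (measurable_prodMk_left (hT hS)).nullMeasurableSet).mp
      (habsorb x hx)
  have hsplit : μ S + ∫⁻ x in Sᶜ, g x ∂μ = μ S + 0 := by
    calc μ S + ∫⁻ x in Sᶜ, g x ∂μ = ∫⁻ x in S, g x ∂μ + ∫⁻ x in Sᶜ, g x ∂μ := by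
          rw [setLIntegral_congr_fun hS hg_one, setLIntegral_const, one_mul]
      _ = μ S + 0 := by
          rw [lintegral_add_compl g hS, add_zero,
            measure_eq_lintegral_of_map_prod_eq hT hfix hS]
  have hg_zero : ∀ᵐ x ∂μ, x ∈ Sᶜ → g x = 0 :=
    (ae_restrict_iff' hS.compl).mp <| (lintegral_eq_zero_iff hg).mp <|
      (ENNReal.add_right_inj (measure_ne_top μ S)).mp hsplit
  refine mem_ae_iff.mp ?_
  filter_upwards [hg_zero, henter] with x hzero hpos
  by_contra hx
  exact (hpos hx).ne' (hzero hx)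

end Stationary

theorem volume_restrict_Icc_pos_of_eventually_nhdsGT {a b : ℝ} (hab : a < b) {s : Set ℝ}
    (hs : ∀ᶠ u in 𝓝[>] a, u ∈ s) : 0 < volume.restrict (Icc a b) s := by
  obtain ⟨ε, hε, hsub⟩ := mem_nhdsGT_iff_exists_Ioo_subset.mp hs
  rw [Measure.restrict_apply' measurableSet_Icc]
  calc 0 < volume (Ioo a (min ε b)) := by simp [hab, show a < ε from hε]
    _ ≤ volume (s ∩ Icc a b) := measure_mono fun u hu =>
        ⟨hsub ⟨hu.1, hu.2.trans_le (min_le_left _ _)⟩, hu.1.le, hu.2.le.trans (min_le_right _ _)⟩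

theorem neg_one_lt_mul_add_mul_one_sub {y u : ℝ} (hy : -1 < y) (hu : u ∈ Icc (0 : ℝ) 1) :
    -1 < u * y + u * (1 - u) := by
  obtain ⟨hu0, hu1⟩ := hu
  rcases hu0.eq_or_lt with rfl | hu0
  · norm_num
  · nlinarith [mul_pos hu0 (show 0 < y + 1 by linarith)]

theorem mul_add_mul_one_sub_mem_Icc {y u : ℝ} (hy : y ∈ Icc (0 : ℝ) 1)
    (hu : u ∈ Icc (0 : ℝ) 1) : u * y + u * (1 - u) ∈ Icc (0 : ℝ) 1 := by
  obtain ⟨hy0, hy1⟩ := hy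
  obtain ⟨hu0, hu1⟩ := hu
  constructor <;> nlinarith

theorem eventually_neg_one_lt_mul_add_mul_one_sub (y : ℝ) :
    ∀ᶠ u in 𝓝[>] (0 : ℝ), -1 < u * y + u * (1 - u) := by
  refine eventually_nhdsWithin_of_eventually_nhds ?_
  have hcont : Continuous fun u : ℝ => u * y + u * (1 - u) := by fun_prop
  exact (hcont.tendsto' 0 0 (by ring)).eventually (Ioi_mem_nhds (by norm_num))

theorem eventually_mul_add_mul_one_sub_mem_Icc {y : ℝ} (hy : -1 < y) :
    ∀ᶠ u in 𝓝[>] (0 : ℝ), u * y + u * (1 - u) ∈ Icc (0 : ℝ) 1 := by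
  have hcont : Continuous fun u : ℝ => u * y + u * (1 - u) := by fun_prop
  have hlt_one : ∀ᶠ u in 𝓝[>] (0 : ℝ), u * y + u * (1 - u) < 1 :=
    eventually_nhdsWithin_of_eventually_nhds <|
      (hcont.tendsto' 0 0 (by ring)).eventually (Iio_mem_nhds one_pos)
  have hsmall : ∀ᶠ u in 𝓝[>] (0 : ℝ), u < y + 1 :=
    eventually_nhdsWithin_of_eventually_nhds (Iio_mem_nhds (by linarith))
  filter_upwards [self_mem_nhdsWithin, hsmall, hlt_one] with u (hu : 0 < u) hsmall hlt_one
  exact ⟨by nlinarith, hlt_one.le⟩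

/-- The unique solution `μ` of the fixed-point equation `Y =_d U·Y + U·(1−U)`
(with `U` uniform on `[0,1]`, independent of `Y`) is supported by `[0,1]`. -/
theorem fixed_point_supported_on_unit_interval (μ : Measure ℝ)
    (hprob : IsProbabilityMeasure μ)
    (hfix : Measure.map (fun p : ℝ × ℝ => p.2 * p.1 + p.2 * (1 - p.2))
      (μ.prod (volume.restrict (Set.Icc (0:ℝ) 1))) = μ) :
    μ (Set.Icc (0:ℝ) 1) = 1 := by
  have hT : Measurable fun p : ℝ × ℝ => p.2 * p.1 + p.2 * (1 - p.2) := by fun_prop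
  have : IsProbabilityMeasure (volume.restrict (Icc (0 : ℝ) 1)) := ⟨by simp⟩
  have hgt : ∀ᵐ y ∂μ, -1 < y := mem_ae_iff.mpr <|
    measure_compl_eq_zero_of_map_prod_eq hT hfix measurableSet_Ioi
      (fun y hy => ae_restrict_of_forall_mem measurableSet_Icc fun _ hu =>
        neg_one_lt_mul_add_mul_one_sub hy hu)
      (ae_of_all _ fun y _ => volume_restrict_Icc_pos_of_eventually_nhdsGT one_pos
        (eventually_neg_one_lt_mul_add_mul_one_sub y))
  refine (prob_compl_eq_zero_iff measurableSet_Icc).mp <|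
    measure_compl_eq_zero_of_map_prod_eq hT hfix measurableSet_Icc
      (fun y hy => ae_restrict_of_forall_mem measurableSet_Icc fun _ hu =>
        mul_add_mul_one_sub_mem_Icc hy hu) ?_
  filter_upwards [hgt] with y hy _
  exact volume_restrict_Icc_pos_of_eventually_nhdsGT one_pos
    (eventually_mul_add_mul_one_sub_mem_Icc hy)
end

section
/- For every x ∈ [0,1] and every y ∈ [0,1], the cumulative distribution function of the random variable U·x + U·(1−U), where U is uniform on [0,1], is given by P(U·x + U·(1−U) ≤ y) = F_x(y), where F_x(y) = (1/2)(1 + x − √((1+x)² − 4y)) if 0 ≤ y < x, F_x(y) = 1 − √((1+x)² − 4y) if x ≤ y < b_x, and F_x(y) = 1 if b_x ≤ y ≤ 1. -/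
open MeasureTheory

/-- The distribution function of `U·x + U·(1−U)` for `U` uniform on `[0,1]`,
with `b_x = ((1+x)/2)²`. -/
noncomputable def F (x y : ℝ) : ℝ :=
  if y < x then (1 + x - Real.sqrt ((1 + x) ^ 2 - 4 * y)) / 2
  else if y < ((1 + x) / 2) ^ 2 then 1 - Real.sqrt ((1 + x) ^ 2 - 4 * y)
  else 1

/-- For every `x, y ∈ [0,1]`, `P(U·x + U·(1−U) ≤ y) = F_x(y)` where `U` is uniform
on `[0,1]`. -/
theorem cdf_of_update (x : ℝ) (hx : x ∈ Set.Icc (0:ℝ) 1)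
    (y : ℝ) (hy : y ∈ Set.Icc (0:ℝ) 1) :
    (volume.restrict (Set.Icc (0:ℝ) 1)) {u : ℝ | u * x + u * (1 - u) ≤ y}
      = ENNReal.ofReal (F x y) := by
  obtain ⟨hx0, hx1⟩ := hx
  obtain ⟨hy0, hy1⟩ := hy
  rw [Measure.restrict_apply' measurableSet_Icc]
  set s := Real.sqrt ((1 + x) ^ 2 - 4 * y) with hs
  by_cases hby : y < ((1 + x) / 2) ^ 2
  · have hD : 0 < (1 + x) ^ 2 - 4 * y := by nlinarith
    have hs2 : s ^ 2 = (1 + x) ^ 2 - 4 * y := Real.sq_sqrt hD.le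
    have hs0 : 0 < s := Real.sqrt_pos.mpr hD
    have hsle : s ≤ 1 + x := by nlinarith
    by_cases hyx : y < x
    · have hsgt : 1 - x < s := by nlinarith
      have hset : {u : ℝ | u * x + u * (1 - u) ≤ y} ∩ Set.Icc (0:ℝ) 1
          = Set.Icc 0 ((1 + x - s) / 2) := by
        ext u
        simp only [Set.mem_inter_iff, Set.mem_setOf_eq, Set.mem_Icc]
        constructor
        · rintro ⟨h1, h2, h3⟩
          exact ⟨h2, by nlinarith⟩
        · rintro ⟨h1, h2⟩
          have ha : (0:ℝ) ≤ (1 + x - s) / 2 - u := by linarith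
          have hb : (0:ℝ) ≤ (1 + x + s) / 2 - u := by nlinarith
          have := mul_nonneg ha hb
          exact ⟨by nlinarith, h1, by nlinarith⟩
      rw [hset, Real.volume_Icc, F, if_pos hyx]
      congr 1
      ring
    · have hsle' : s ≤ 1 - x := by nlinarith
      have hset : {u : ℝ | u * x + u * (1 - u) ≤ y} ∩ Set.Icc (0:ℝ) 1
          = Set.Icc 0 ((1 + x - s) / 2) ∪ Set.Icc ((1 + x + s) / 2) 1 := by
        ext u
        simp only [Set.mem_inter_iff, Set.mem_setOf_eq, Set.mem_union, Set.mem_Icc]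
        constructor
        · rintro ⟨h1, h2, h3⟩
          rcases le_or_gt u ((1 + x - s) / 2) with h | h
          · exact Or.inl ⟨h2, h⟩
          · refine Or.inr ⟨?_, h3⟩
            by_contra hc
            push_neg at hc
            have ha : (0:ℝ) < u - (1 + x - s) / 2 := by linarith
            have hb : (0:ℝ) < (1 + x + s) / 2 - u := by linarith
            have := mul_pos ha hb
            nlinarith
        · rintro (⟨h1, h2⟩ | ⟨h1, h2⟩)
          · have ha : (0:ℝ) ≤ (1 + x - s) / 2 - u := by linarith
            have hb : (0:ℝ) ≤ (1 + x + s) / 2 - u := by linarith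
            have := mul_nonneg ha hb
            exact ⟨by nlinarith, h1, by linarith⟩
          · have ha : (0:ℝ) ≤ u - (1 + x - s) / 2 := by linarith
            have hb : (0:ℝ) ≤ u - (1 + x + s) / 2 := by linarith
            have := mul_nonneg ha hb
            exact ⟨by nlinarith, by linarith, h2⟩
      have hdisj : Disjoint (Set.Icc (0:ℝ) ((1 + x - s) / 2))
          (Set.Icc ((1 + x + s) / 2) 1) := by
        rw [Set.disjoint_left]
        rintro u ⟨_, h2⟩ ⟨h3, _⟩
        linarith
      rw [hset, measure_union hdisj measurableSet_Icc, Real.volume_Icc, Real.volume_Icc,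
        ← ENNReal.ofReal_add (by linarith) (by linarith), F, if_neg hyx, if_pos hby]
      congr 1
      ring
  · have hset : {u : ℝ | u * x + u * (1 - u) ≤ y} ∩ Set.Icc (0:ℝ) 1
        = Set.Icc (0:ℝ) 1 := by
      apply Set.inter_eq_right.mpr
      rintro u ⟨h1, h2⟩
      simp only [Set.mem_setOf_eq]
      nlinarith [sq_nonneg (2 * u - (1 + x))]
    rw [hset, Real.volume_Icc, F, if_neg (by push_neg at hby ⊢; nlinarith), if_neg hby]
    norm_num
end

section
/- For x ∈ [0, 1/4], set q_x = (4/7)x and r_x = 1 − (8/7)√(x(x+2)), and define G_x^{−1}(z) = −(7/4)z + √(7z + (1−x)²) + x − 1 for z ∈ [0, q_x], G_x^{−1}(z) = −(7/4)z + 2√(7z + 9 + x(x+2)) − 6 for z ∈ (q_x, r_x], and G_x^{−1}(z) = (1/256)(15 + 8x − 7z)(1 + 8x + 7z) for z ∈ (r_x, 1]. Then for every z ∈ [0,1], G_x(G_x^{−1}(z)) = z, where G_x(y) = (8/7)·(F_x(y) − (1/2)·min(y, 1/4)). -/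
open MeasureTheory

/-- `G_x(y) = (8/7)·(F_x(y) − (1/2)·min(y, 1/4))`. -/
noncomputable def G (x y : ℝ) : ℝ := 8 / 7 * (F x y - (1 / 2) * min y (1 / 4))

/-- The explicit inverse of `G_x` for `x ∈ [0,1/4]`, given piecewise with breakpoints
`q_x = (4/7)x` and `r_x = 1 − (8/7)√(x(x+2))`. -/
noncomputable def Ginv (x z : ℝ) : ℝ :=
  if z ≤ 4 / 7 * x then
    -(7 / 4) * z + Real.sqrt (7 * z + (1 - x) ^ 2) + x - 1
  else if z ≤ 1 - 8 / 7 * Real.sqrt (x * (x + 2)) then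
    -(7 / 4) * z + 2 * Real.sqrt (7 * z + 9 + x * (x + 2)) - 6
  else
    (1 / 256) * (15 + 8 * x - 7 * z) * (1 + 8 * x + 7 * z)

/-!
On `[0, 1]` the function `G_x` has three pieces: `y ≤ x`, `x ≤ y ≤ 1/4` and
`1/4 ≤ y ≤ b_x`. On each of them `G_x(y)` is affine in `y` and `√((1+x)² − 4y)`, so the
equation `G_x(y) = z` becomes a quadratic in that square root, and each branch of `Ginv x`
is the corresponding root. It remains to check that the root lands in the right piece, which
is exactly what the breakpoints `q_x` and `r_x` encode.
-/

open Real

section Pieces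

variable {x y : ℝ}

lemma F_of_le (hx : x ≤ 1) (hy : y ≤ x) :
    F x y = (1 + x - √((1 + x) ^ 2 - 4 * y)) / 2 := by
  unfold F
  split_ifs with hyx hyb
  · rfl
  all_goals
    obtain rfl : y = x := le_antisymm hy (not_lt.mp hyx)
    rw [show (1 + y) ^ 2 - 4 * y = (1 - y) ^ 2 by ring, sqrt_sq (by linarith)]
  · ring
  · nlinarith

lemma F_of_le_of_le (hxy : x ≤ y) (hyb : 4 * y ≤ (1 + x) ^ 2) :
    F x y = 1 - √((1 + x) ^ 2 - 4 * y) := by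
  unfold F
  split_ifs with hyx hyb'
  · linarith
  · rfl
  · rw [show (1 + x) ^ 2 - 4 * y = 0 by nlinarith, sqrt_zero, sub_zero]

lemma G_of_le (hx : x ≤ 1 / 4) (hy : y ≤ x) :
    G x y = 4 / 7 * (1 + x - y - √((1 + x) ^ 2 - 4 * y)) := by
  rw [G, F_of_le (by linarith) hy, min_eq_left (by linarith)]
  ring

lemma G_of_le_of_le_quarter (hx : 0 ≤ x) (hxy : x ≤ y) (hy : y ≤ 1 / 4) :
    G x y = 8 / 7 * (1 - y / 2 - √((1 + x) ^ 2 - 4 * y)) := by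
  rw [G, F_of_le_of_le hxy (by nlinarith), min_eq_left hy]
  ring

lemma G_of_quarter_le (hxy : x ≤ y) (hy : 1 / 4 ≤ y) (hyb : 4 * y ≤ (1 + x) ^ 2) :
    G x y = 1 - 8 / 7 * √((1 + x) ^ 2 - 4 * y) := by
  rw [G, F_of_le_of_le hxy hyb, min_eq_right hy]
  ring

end Pieces

section Branches

variable {x z s : ℝ}

lemma G_first_branch (hx : x ≤ 1 / 4) (hz0 : 0 ≤ z) (hz : z ≤ 4 / 7 * x) (hs : 0 ≤ s)
    (hs2 : s ^ 2 = 7 * z + (1 - x) ^ 2) :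
    G x (-(7 / 4) * z + s + x - 1) = z := by
  have hs1 : s ≤ 1 + 7 / 4 * z := by
    refine (sq_le_sq₀ hs (by nlinarith)).1 ?_
    nlinarith [mul_nonneg (by linarith : (0 : ℝ) ≤ x - 7 / 4 * z)
      (by linarith : (0 : ℝ) ≤ 2 - x - 7 / 4 * z)]
  have hs2' : s ≤ 2 := (sq_le_sq₀ hs zero_le_two).1 (by nlinarith)
  rw [G_of_le hx (by linarith),
    show (1 + x) ^ 2 - 4 * (-(7 / 4) * z + s + x - 1) = (2 - s) ^ 2 by linear_combination -hs2,
    sqrt_sq (by linarith)]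
  ring

lemma G_second_branch (hx0 : 0 ≤ x) (hx1 : x ≤ 1 / 4) (hzq : 4 / 7 * x < z)
    (hzr : z ≤ 1 - 8 / 7 * √(x * (x + 2))) (hs : 0 ≤ s)
    (hs2 : s ^ 2 = 7 * z + 9 + x * (x + 2)) :
    G x (-(7 / 4) * z + 2 * s - 6) = z := by
  set t := √(x * (x + 2))
  have ht : 0 ≤ t := sqrt_nonneg _
  have ht2 : t ^ 2 = x * (x + 2) := sq_sqrt (by positivity)
  have hs4 : s ≤ 4 - t := (sq_le_sq₀ hs (by linarith)).1 (by nlinarith)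
  have hxy : x ≤ -(7 / 4) * z + 2 * s - 6 := by
    have : 7 / 4 * z + 6 + x ≤ 2 * s := by
      refine (sq_le_sq₀ (by linarith) (by linarith)).1 ?_
      nlinarith [mul_nonneg (by linarith : (0 : ℝ) ≤ 7 / 4 * z - x)
        (by linarith : (0 : ℝ) ≤ 4 - 3 * x - 7 / 4 * z)]
    linarith
  have hy : -(7 / 4) * z + 2 * s - 6 ≤ 1 / 4 := by
    have : 2 * s ≤ 25 / 4 + 7 / 4 * z := by
      refine (sq_le_sq₀ (by linarith) (by linarith)).1 ?_
      nlinarith [mul_self_le_mul_self (by linarith : (0 : ℝ) ≤ 8 * t)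
        (by linarith : 8 * t ≤ 7 * (1 - z))]
    linarith
  rw [G_of_le_of_le_quarter hx0 hxy hy,
    show (1 + x) ^ 2 - 4 * (-(7 / 4) * z + 2 * s - 6) = (4 - s) ^ 2 by
      linear_combination -hs2,
    sqrt_sq (by linarith)]
  ring

lemma G_third_branch (hx0 : 0 ≤ x) (hx1 : x ≤ 1 / 4) (hz : z ≤ 1)
    (hzr : 1 - 8 / 7 * √(x * (x + 2)) < z) :
    G x (1 / 256 * (15 + 8 * x - 7 * z) * (1 + 8 * x + 7 * z)) = z := by
  set y := 1 / 256 * (15 + 8 * x - 7 * z) * (1 + 8 * x + 7 * z)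
  have hsq : (1 + x) ^ 2 - 4 * y = (7 / 8 * (1 - z)) ^ 2 := by ring
  -- `4y = (1 + x)² − (7/8 (1 − z))² ≥ (1 + x)² − x(x + 2) = 1` because `z > r_x`.
  have hy : 1 / 4 ≤ y := by
    have ht2 : √(x * (x + 2)) ^ 2 = x * (x + 2) := sq_sqrt (by positivity)
    nlinarith [mul_self_le_mul_self (by linarith : 0 ≤ 7 / 8 * (1 - z))
      (by linarith : 7 / 8 * (1 - z) ≤ √(x * (x + 2)))]
  rw [G_of_quarter_le (by linarith) hy (by nlinarith), hsq, sqrt_sq (by linarith)]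
  ring

end Branches

/-- For `x ∈ [0,1/4]`, the piecewise formula `Ginv x` is a right inverse of `G_x` on
`[0,1]`: `G_x(G_x^{−1}(z)) = z` for every `z ∈ [0,1]`. -/
theorem G_inverse_small_x (x : ℝ) (hx : x ∈ Set.Icc (0:ℝ) (1 / 4))
    (z : ℝ) (hz : z ∈ Set.Icc (0:ℝ) 1) :
    G x (Ginv x z) = z := by
  obtain ⟨hx0, hx1⟩ := hx
  obtain ⟨hz0, hz1⟩ := hz
  unfold Ginv
  split_ifs with hzq hzr
  · exact G_first_branch hx1 hz0 hzq (sqrt_nonneg _) (sq_sqrt (by positivity))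
  · exact G_second_branch hx0 hx1 (not_le.mp hzq) hzr (sqrt_nonneg _) (sq_sqrt (by positivity))
  · exact G_third_branch hx0 hx1 hz1 (not_le.mp hzr)
end
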